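/- Grassmann convolution theorem: for two polynomials f, f' in 2n Grassmann variables, define the convolution (f ∗ f')(ξ) = ∫ dη f(η) f'(ξ−η) and the Fourier transform (Ff)(ξ) = ∫ dη f(η) exp(Σ_i ξ_i⋆ η_i) (with ⋆ a fixed conjugation on the coefficient algebra). Then F(f ∗ f') = (Ff)·(Ff'). -/

import Mathlib

/-- The ordered monomial `x_I = x_{i_1} * ... * x_{i_k}` associated with a finite
index set `I = {i_1 < ... < i_k}`. -/
def gmonomial {A : Type*} [Ring A] {m : ℕ} (x : Fin m → A) (I : Finset (Fin m)) : A :=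
  ((I.sort (· ≤ ·)).map x).prod

/-- Evaluation of the Grassmann polynomial with coefficient family `f` at the
vector `x` of (odd) algebra elements: `f(x) = sum_I f^I x_I`. -/
def gevalP {A : Type*} [Ring A] {m : ℕ} (f : Finset (Fin m) → A) (x : Fin m → A) : A :=
  ∑ I : Finset (Fin m), f I * gmonomial x I

/-- The finite exponential series `sum_{k < N} x^k / k!`. -/
noncomputable def gexp {A : Type*} [Ring A] [Algebra ℂ A] (N : ℕ) (x : A) : A :=
  ∑ k ∈ Finset.range N, ((k.factorial : ℂ))⁻¹ • x ^ k

/-!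
Everything is computed on monomials. Since the even elements `ξᵢ⋆ ηᵢ` commute and square to
zero, `exp (∑ ξᵢ⋆ ηᵢ) = ∑_S (ξ⋆η)_S`, so the Fourier transform of `c η_B` is `± c ξ⋆_{Bᶜ}`.
Expanding `f'(η - θ)` and integrating out `θ` turns `f * f'` into
`∑_{Iᶜ ⊆ J} ± f_I f'_J η_{J \ Iᶜ}`, whose Fourier transform is `± f_I f'_J ξ⋆_{Iᶜ ∪ Jᶜ}`. On the
other side `(F f)_I (F f')_J = ± f_I f'_J ξ⋆_{Iᶜ} ξ⋆_{Jᶜ}` vanishes unless `Iᶜ ⊆ J`, and is then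
`± f_I f'_J ξ⋆_{Iᶜ ∪ Jᶜ}` as well. The two signs agree by a parity count that uses that the
number `2n` of generators is even.
-/

open Finset

namespace Grassmann

variable {A : Type*} [Ring A] {m : ℕ}

/-- `(-1) ^ inversions S T` is the sign of the shuffle that sorts the word `x_S x_T`. -/
def inversions (S T : Finset (Fin m)) : ℕ := ∑ s ∈ S, #(T.filter (· < s))

lemma inversions_insert_left {a : Fin m} {S : Finset (Fin m)} (ha : a ∉ S) (T : Finset (Fin m)) :
    inversions (insert a S) T = #(T.filter (· < a)) + inversions S T :=
  sum_insert ha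

lemma inversions_insert_right {a : Fin m} {S T : Finset (Fin m)} (ha : a ∉ T)
    (h : ∀ b ∈ S, a < b) : inversions S (insert a T) = #S + inversions S T := by
  have hcard : ∀ s ∈ S, #((insert a T).filter (· < s)) = #(T.filter (· < s)) + 1 := fun s hs => by
    rw [filter_insert, if_pos (h s hs), card_insert_of_notMem fun hx => ha (mem_filter.1 hx).1]
  rw [inversions, inversions, sum_congr rfl hcard, sum_add_distrib, card_eq_sum_ones, add_comm]

lemma inversions_union_left {S S' : Finset (Fin m)} (h : Disjoint S S') (T : Finset (Fin m)) :
    inversions (S ∪ S') T = inversions S T + inversions S' T :=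
  sum_union h

lemma inversions_union_right (S : Finset (Fin m)) {T T' : Finset (Fin m)} (h : Disjoint T T') :
    inversions S (T ∪ T') = inversions S T + inversions S T' := by
  rw [inversions, inversions, inversions, ← sum_add_distrib]
  refine sum_congr rfl fun s _ => ?_
  rw [filter_union, card_union_of_disjoint (h.mono (filter_subset _ _) (filter_subset _ _))]

lemma choose_two_add (p q : ℕ) : (p + q).choose 2 = p.choose 2 + q.choose 2 + p * q := by
  induction q with
  | zero => simp
  | succ q ih =>
    rw [← add_assoc, Nat.choose_succ_succ, Nat.choose_succ_succ, ih, Nat.choose_one_right,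
      Nat.choose_one_right]
    ring

section Monomial

variable (x : Fin m → A)

@[simp]
lemma gmonomial_empty : gmonomial x ∅ = 1 := by simp [gmonomial]

lemma gmonomial_insert_of_lt {a : Fin m} {T : Finset (Fin m)} (h : ∀ b ∈ T, a < b) :
    gmonomial x (insert a T) = x a * gmonomial x T := by
  rw [gmonomial, sort_insert _ (fun b hb => (h b hb).le) fun ha => lt_irrefl a (h a ha)]
  simp [gmonomial]

lemma gmonomial_union_of_lt {S T : Finset (Fin m)} (h : ∀ s ∈ S, ∀ t ∈ T, s < t) :
    gmonomial x (S ∪ T) = gmonomial x S * gmonomial x T := by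
  induction S using Finset.induction_on_min with
  | empty => simp
  | insert a S ha ih =>
    have haST : ∀ b ∈ S ∪ T, a < b := by
      simp only [mem_union]
      rintro b (hb | hb)
      exacts [ha b hb, h a (mem_insert_self a S) b hb]
    rw [insert_union, gmonomial_insert_of_lt x haST, gmonomial_insert_of_lt x ha,
      ih fun s hs => h s (mem_insert_of_mem hs), mul_assoc]

lemma gmonomial_mem {C : Subring A} (hx : ∀ i, x i ∈ C) (S : Finset (Fin m)) :
    gmonomial x S ∈ C :=
  Subring.list_prod_mem _ fun _ ha => by
    obtain ⟨i, _, rfl⟩ := List.mem_map.1 ha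
    exact hx i

variable {x}

lemma mul_gmonomial_eq_pow_smul {a : A} {ε : ℤ} (h : ∀ i, a * x i = ε • (x i * a))
    (T : Finset (Fin m)) : a * gmonomial x T = ε ^ #T • (gmonomial x T * a) := by
  rw [gmonomial, ← length_sort (· ≤ ·) (s := T)]
  induction T.sort (· ≤ ·) with
  | nil => simp
  | cons i l ih =>
    rw [List.map_cons, List.prod_cons, ← mul_assoc, h, smul_mul_assoc, mul_assoc, ih,
      mul_smul_comm, smul_smul, List.length_cons, pow_succ', mul_assoc]

lemma mul_gmonomial_of_anticomm {a : A} (h : ∀ i, a * x i = -(x i * a)) (T : Finset (Fin m)) :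
    a * gmonomial x T = (-1) ^ #T • (gmonomial x T * a) :=
  mul_gmonomial_eq_pow_smul (fun i => by rw [h, neg_one_smul]) T

lemma gmonomial_mul_gmonomial_comm {y : Fin m → A} (h : ∀ i j, x i * y j = -(y j * x i))
    (T S : Finset (Fin m)) :
    gmonomial y T * gmonomial x S = (-1) ^ (#T * #S) • (gmonomial x S * gmonomial y T) := by
  have hT : ∀ i, gmonomial y T * x i = (-1) ^ #T • (x i * gmonomial y T) := fun i => by
    rw [mul_gmonomial_of_anticomm (h i), smul_smul, ← mul_pow, neg_one_mul, neg_neg, one_pow,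
      one_smul]
  rw [mul_gmonomial_eq_pow_smul hT, pow_mul]

variable (hx : ∀ i j, x i * x j = -(x j * x i)) (hx0 : ∀ i, x i * x i = 0)
include hx hx0

lemma mul_gmonomial (a : Fin m) (T : Finset (Fin m)) :
    x a * gmonomial x T =
      if a ∈ T then 0 else (-1) ^ #(T.filter (· < a)) • gmonomial x (insert a T) := by
  -- Split `x_T = x_L x_U` at `a`: `x a` passes `x_L` with the sign `(-1) ^ #L`, and then either
  -- meets its own factor in `x_U` or completes it to `x_{insert a U}`.
  set L := T.filter (· < a)
  set U := T.filter (fun t => ¬ t < a)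
  have hLU : ∀ s ∈ L, ∀ t ∈ U, s < t := fun s hs t ht =>
    lt_of_lt_of_le (mem_filter.1 hs).2 (not_lt.1 (mem_filter.1 ht).2)
  conv_lhs => rw [← filter_union_filter_not_eq (· < a) T, gmonomial_union_of_lt x hLU,
    ← mul_assoc, mul_gmonomial_of_anticomm (hx a), smul_mul_assoc, mul_assoc]
  split_ifs with haT
  · have haU : a ∈ U := mem_filter.2 ⟨haT, lt_irrefl a⟩
    have hgt : ∀ b ∈ U.erase a, a < b := fun b hb =>
      lt_of_le_of_ne (not_lt.1 (mem_filter.1 (mem_of_mem_erase hb)).2) (ne_of_mem_erase hb).symm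
    rw [← insert_erase haU, gmonomial_insert_of_lt x hgt, ← mul_assoc (x a) (x a), hx0, zero_mul,
      mul_zero, smul_zero]
  · have hgt : ∀ b ∈ U, a < b := fun b hb =>
      lt_of_le_of_ne (not_lt.1 (mem_filter.1 hb).2) fun h => haT (h ▸ (mem_filter.1 hb).1)
    have hLaU : ∀ s ∈ L, ∀ t ∈ insert a U, s < t := fun s hs t ht => by
      rcases mem_insert.1 ht with rfl | ht
      exacts [(mem_filter.1 hs).2, hLU s hs t ht]
    rw [← gmonomial_insert_of_lt x hgt, ← gmonomial_union_of_lt x hLaU, union_insert,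
      filter_union_filter_not_eq]

lemma gmonomial_mul (S T : Finset (Fin m)) :
    gmonomial x S * gmonomial x T =
      if Disjoint S T then (-1) ^ inversions S T • gmonomial x (S ∪ T) else 0 := by
  induction S using Finset.induction_on_min with
  | empty => simp [inversions]
  | insert a S ha ih =>
    have haS : a ∉ S := fun h => lt_irrefl a (ha a h)
    rw [gmonomial_insert_of_lt x ha, mul_assoc, ih]
    by_cases hd : Disjoint S T
    · rw [if_pos hd, mul_smul_comm, mul_gmonomial hx hx0]
      by_cases haT : a ∈ T
      · rw [if_pos (mem_union_right S haT), smul_zero,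
          if_neg fun h => disjoint_left.1 h (mem_insert_self a S) haT]
      · have hfilt : (S ∪ T).filter (· < a) = T.filter (· < a) := by
          rw [filter_union, filter_false_of_mem fun c hc => not_lt_of_gt (ha c hc), empty_union]
        rw [if_neg (by simp [haS, haT]), if_pos (disjoint_insert_left.2 ⟨haT, hd⟩), smul_smul,
          insert_union, hfilt, ← pow_add, inversions_insert_left haS, add_comm]
    · rw [if_neg hd, if_neg fun h => hd (h.mono_left (subset_insert a S)), mul_zero]

end Monomial

lemma gmonomial_sub {u v : Fin m → A} (h : ∀ i j, v i * u j = -(u j * v i))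
    (J : Finset (Fin m)) :
    gmonomial (fun i => u i - v i) J = ∑ K ∈ J.powerset,
      (-1) ^ (#K + inversions (J \ K) K) • (gmonomial u (J \ K) * gmonomial v K) := by
  induction J using Finset.induction_on_min with
  | empty => simp [inversions]
  | insert a J ha ih =>
    have haJ : a ∉ J := fun h => lt_irrefl a (ha a h)
    rw [gmonomial_insert_of_lt _ ha, ih, sum_powerset_insert haJ, sub_mul, mul_sum, mul_sum,
      sub_eq_add_neg, ← sum_neg_distrib]
    congr 1 <;> refine sum_congr rfl fun K hK => ?_
    · have haK : a ∉ K := fun hx => haJ (mem_powerset.1 hK hx)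
      have hgt : ∀ b ∈ J \ K, a < b := fun b hb => ha b (mem_sdiff.1 hb).1
      have hK0 : K.filter (· < a) = ∅ :=
        filter_false_of_mem fun c hc => not_lt_of_gt (ha c (mem_powerset.1 hK hc))
      rw [insert_sdiff_of_notMem _ haK, gmonomial_insert_of_lt u hgt,
        inversions_insert_left (fun h => haJ (mem_sdiff.1 h).1), hK0, card_empty, zero_add,
        mul_smul_comm, mul_assoc]
    · have haK : a ∉ K := fun hx => haJ (mem_powerset.1 hK hx)
      have hKgt : ∀ b ∈ K, a < b := fun b hb => ha b (mem_powerset.1 hK hb)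
      have hsdiff : insert a J \ insert a K = J \ K := by
        rw [insert_sdiff_insert, sdiff_insert_of_notMem haJ]
      rw [hsdiff, mul_smul_comm, ← mul_assoc, mul_gmonomial_of_anticomm (h a), smul_mul_assoc,
        mul_assoc, ← gmonomial_insert_of_lt v hKgt, smul_smul, ← pow_add, ← neg_smul,
        card_insert_of_notMem haK,
        inversions_insert_right haK fun b hb => ha b (mem_sdiff.1 hb).1]
      congr 1
      rw [neg_eq_neg_one_mul, ← pow_succ']
      ring

lemma add_pow_succ_of_mul_self_eq_zero {a b : A} (hab : Commute a b) (ha : a * a = 0) (k : ℕ) :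
    (a + b) ^ (k + 1) = b ^ (k + 1) + (k + 1) • (a * b ^ k) := by
  induction k with
  | zero => simp [add_comm]
  | succ k ih =>
    have hba : b ^ (k + 1) * a = a * b ^ (k + 1) := ((hab.pow_right (k + 1)).eq).symm
    have haba : a * b ^ k * a = 0 := by
      rw [mul_assoc, ← (hab.pow_right k).eq, ← mul_assoc, ha, zero_mul]
    rw [pow_succ, ih, add_mul, mul_add, hba, smul_mul_assoc, mul_add, haba, zero_add, mul_assoc,
      ← pow_succ, ← pow_succ, succ_nsmul _ (k + 1)]
    abel

lemma sum_pow_eq_factorial_smul {x : Fin m → A} (hc : ∀ i j, Commute (x i) (x j))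
    (hx0 : ∀ i, x i * x i = 0) (T : Finset (Fin m)) (k : ℕ) :
    (∑ i ∈ T, x i) ^ k = k.factorial • ∑ S ∈ T.powersetCard k, gmonomial x S := by
  induction T using Finset.induction_on_min generalizing k with
  | empty =>
    cases k with
    | zero => simp
    | succ k => rw [powersetCard_eq_empty.2 (by simp)]; simp
  | insert a T ha ih =>
    have haT : a ∉ T := fun h => lt_irrefl a (ha a h)
    cases k with
    | zero => simp
    | succ k =>
      have hins : ∀ S ∈ T.powersetCard k, gmonomial x (insert a S) = x a * gmonomial x S :=
        fun S hS => gmonomial_insert_of_lt x fun b hb => ha b ((mem_powersetCard.1 hS).1 hb)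
      rw [sum_insert haT, add_pow_succ_of_mul_self_eq_zero (Commute.sum_right _ _ _ fun i _ =>
        hc a i) (hx0 a), ih, ih, powersetCard_succ_insert haT, sum_union, sum_image, smul_add,
        sum_congr rfl hins, ← mul_sum, mul_smul_comm, smul_smul, Nat.factorial_succ]
      · intro S₁ h₁ S₂ h₂ h
        rw [← erase_insert fun hx => haT ((mem_powersetCard.1 h₁).1 hx), h,
          erase_insert fun hx => haT ((mem_powersetCard.1 h₂).1 hx)]
      · refine disjoint_left.2 fun S hS hS' => ?_
        obtain ⟨S', -, rfl⟩ := mem_image.1 hS'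
        exact haT ((mem_powersetCard.1 hS).1 (mem_insert_self a S'))

lemma gmonomial_pointwise_mul {X w : Fin m → A} (hXw : ∀ i j, X i * w j = -(w j * X i))
    (S : Finset (Fin m)) :
    gmonomial (fun i => X i * w i) S = (-1) ^ (#S).choose 2 • (gmonomial X S * gmonomial w S) := by
  induction S using Finset.induction_on_min with
  | empty => simp
  | insert a S ha ih =>
    have haS : a ∉ S := fun h => lt_irrefl a (ha a h)
    have hwX : ∀ j, w a * X j = -(X j * w a) := fun j => by rw [hXw, neg_neg]
    rw [gmonomial_insert_of_lt _ ha, ih, gmonomial_insert_of_lt X ha, gmonomial_insert_of_lt w ha,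
      card_insert_of_notMem haS, Nat.choose_succ_succ, Nat.choose_one_right, mul_smul_comm,
      mul_assoc, ← mul_assoc (w a), mul_gmonomial_of_anticomm hwX, smul_mul_assoc, mul_smul_comm,
      smul_smul, ← pow_add, mul_assoc (gmonomial X S), ← mul_assoc (X a), add_comm]

section Berezin

variable {F : Type*} [FunLike F A A] [AddMonoidHomClass F A A]

def IsBerezinIntegral (C : Subring A) (w : Fin m → A) (ber : F) : Prop :=
  ∀ c ∈ C, ∀ I, ber (c * gmonomial w I) = if I = univ then c else 0

variable {C : Subring A} {w X : Fin m → A} {ber : F}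

lemma IsBerezinIntegral.apply_mul_gmonomial_mul_gmonomial (hber : IsBerezinIntegral C w ber)
    (hw : ∀ i j, w i * w j = -(w j * w i)) (hw0 : ∀ i, w i * w i = 0) {c : A} (hc : c ∈ C)
    (B S : Finset (Fin m)) :
    ber (c * (gmonomial w B * gmonomial w S)) =
      if S = Bᶜ then (-1) ^ inversions B Bᶜ • c else 0 := by
  rw [gmonomial_mul hw hw0]
  split_ifs with hd hS hS
  · subst hS
    rw [mul_smul_comm, map_zsmul, hber c hc, if_pos (union_compl B)]
  · have hunion : B ∪ S ≠ univ := fun h => hS (IsCompl.of_eq (disjoint_iff.1 hd) h).compl_eq.symm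
    rw [mul_smul_comm, map_zsmul, hber c hc, if_neg hunion, smul_zero]
  · exact absurd (hS ▸ disjoint_compl_right) hd
  · rw [mul_zero, map_zero]

def convSign (I J : Finset (Fin m)) : ℤ :=
  (-1) ^ (#Iᶜ + inversions (J \ Iᶜ) Iᶜ + #I * #(J \ Iᶜ) + inversions I Iᶜ)

lemma IsBerezinIntegral.apply_gevalP_mul_gevalP_sub {θ η : Fin m → A}
    (hber : IsBerezinIntegral C θ ber) (hθ : ∀ i j, θ i * θ j = -(θ j * θ i))
    (hθ0 : ∀ i, θ i * θ i = 0) (hηθ : ∀ i j, η i * θ j = -(θ j * η i)) (hηC : ∀ i, η i ∈ C)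
    {f f' : Finset (Fin m) → A} (hfC : ∀ I, f I ∈ C) (hf'C : ∀ I, f' I ∈ C)
    (hf'central : ∀ I a, f' I * a = a * f' I) :
    ber (gevalP f θ * gevalP f' (fun i => η i - θ i)) =
      ∑ I : Finset (Fin m), ∑ J : Finset (Fin m),
        if Iᶜ ⊆ J then convSign I J • (f I * f' J * gmonomial η (J \ Iᶜ)) else 0 := by
  have hθη : ∀ i j, θ i * η j = -(η j * θ i) := fun i j => by rw [hηθ, neg_neg]
  have hterm : ∀ I J K, ber (f I * gmonomial θ I * (f' J * ((-1) ^ (#K + inversions (J \ K) K) •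
      (gmonomial η (J \ K) * gmonomial θ K)))) =
        if K = Iᶜ then convSign I J • (f I * f' J * gmonomial η (J \ Iᶜ)) else 0 := by
    intro I J K
    have hc : f I * f' J * gmonomial η (J \ K) ∈ C :=
      mul_mem (mul_mem (hfC I) (hf'C J)) (gmonomial_mem η hηC _)
    rw [mul_smul_comm, mul_smul_comm, map_zsmul, mul_assoc, ← mul_assoc (gmonomial θ I),
      ← hf'central J, mul_assoc, ← mul_assoc (gmonomial θ I), gmonomial_mul_gmonomial_comm hηθ,
      smul_mul_assoc, mul_smul_comm, mul_smul_comm, map_zsmul, mul_assoc, ← mul_assoc (f I),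
      ← mul_assoc (f I * f' J), hber.apply_mul_gmonomial_mul_gmonomial hθ hθ0 hc]
    split_ifs with hK
    · subst hK
      rw [smul_smul, smul_smul, convSign, pow_add, pow_add, pow_add]
      ring_nf
    · rw [smul_zero, smul_zero]
  simp only [gevalP]
  rw [sum_mul_sum, map_sum]
  refine sum_congr rfl fun I _ => ?_
  rw [map_sum]
  refine sum_congr rfl fun J _ => ?_
  rw [gmonomial_sub hθη, mul_sum, mul_sum, map_sum, sum_congr rfl fun K _ => hterm I J K,
    sum_ite_eq']
  simp only [mem_powerset]

def fourierSign (B : Finset (Fin m)) : ℤ :=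
  (-1) ^ ((#Bᶜ).choose 2 + #B * #Bᶜ + inversions B Bᶜ)

-- Only parities matter, and as `m` is even, `a ≡ p`, `j ≡ q` and `b ≡ p + q` modulo 2.
lemma neg_one_pow_convolution_exponent {m a b j p q d e f g : ℕ} (hm : Even m)
    (ha : a + p = m) (hj : j + q = m) (hb : b + (p + q) = m) :
    (-1 : ℤ) ^ (p + d + a * b + f + (p.choose 2 + q.choose 2 + p * q + b * (p + q) + (d + e))) =
      (-1) ^ (p.choose 2 + a * p + f + (q.choose 2 + j * q + (e + g)) + g) := by
  have hmod : ∀ x y : ℕ, x + y = m → (x : ZMod 2) = y := fun x y h => by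
    rw [ZMod.natCast_eq_natCast_iff']
    obtain ⟨r, rfl⟩ := hm
    omega
  refine neg_one_pow_congr ?_
  simp only [← ZMod.natCast_eq_zero_iff_even]
  push_cast
  rw [hmod a p ha, hmod j q hj, hmod b _ hb]
  push_cast
  generalize (p : ZMod 2) = P, (q : ZMod 2) = Q, (d : ZMod 2) = D, (e : ZMod 2) = E,
    (f : ZMod 2) = F, (g : ZMod 2) = G, ((p.choose 2 : ℕ) : ZMod 2) = CP,
    ((q.choose 2 : ℕ) : ZMod 2) = CQ
  revert P Q D E F G CP CQ
  decide

lemma convSign_mul_fourierSign_sdiff (hm : Even m) {I J : Finset (Fin m)} (h : Iᶜ ⊆ J) :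
    convSign I J * fourierSign (J \ Iᶜ) =
      fourierSign I * fourierSign J * (-1) ^ inversions Iᶜ Jᶜ := by
  have hdisj : Disjoint Iᶜ Jᶜ := disjoint_compl_right_iff.2 h
  have hcompl : (J \ Iᶜ)ᶜ = Iᶜ ∪ Jᶜ := by
    ext; simp only [mem_compl, mem_sdiff, mem_union]; tauto
  have hinvJ : inversions J Jᶜ = inversions (J \ Iᶜ) Jᶜ + inversions Iᶜ Jᶜ := by
    have := inversions_union_left (sdiff_disjoint : Disjoint (J \ Iᶜ) Iᶜ) Jᶜ
    rwa [sdiff_union_of_subset h] at this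
  have hI : #I + #Iᶜ = m := by rw [card_add_card_compl, Fintype.card_fin]
  have hJ : #J + #Jᶜ = m := by rw [card_add_card_compl, Fintype.card_fin]
  have hB : #(J \ Iᶜ) + (#Iᶜ + #Jᶜ) = m := by
    rw [← card_union_of_disjoint hdisj, ← hcompl, card_add_card_compl, Fintype.card_fin]
  rw [convSign, fourierSign, fourierSign, fourierSign, hcompl, card_union_of_disjoint hdisj,
    inversions_union_right _ hdisj, hinvJ, choose_two_add, ← pow_add, ← pow_add, ← pow_add]
  exact neg_one_pow_convolution_exponent hm hI hJ hB

section Fourier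

variable [Algebra ℂ A]

-- `gexp N` is the full exponential once `m < N`: a sum of `m` commuting square-zero terms has
-- vanishing `(m + 1)`-st power.
lemma gexp_sum {x : Fin m → A} (hc : ∀ i j, Commute (x i) (x j)) (hx0 : ∀ i, x i * x i = 0)
    {N : ℕ} (hN : m < N) : gexp N (∑ i, x i) = ∑ S : Finset (Fin m), gmonomial x S := by
  have hterm : ∀ k, ((k.factorial : ℂ))⁻¹ • (∑ i, x i) ^ k =
      ∑ S ∈ powersetCard k univ, gmonomial x S := fun k => by
    rw [sum_pow_eq_factorial_smul hc hx0, ← Nat.cast_smul_eq_nsmul ℂ, smul_smul,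
      inv_mul_cancel₀ (Nat.cast_ne_zero.2 k.factorial_ne_zero), one_smul]
  have hrange : range (#(univ : Finset (Fin m)) + 1) ⊆ range N :=
    range_subset_range.2 (by simpa using hN)
  rw [gexp, sum_congr rfl fun k _ => hterm k, ← powerset_univ, sum_powerset]
  refine (sum_subset hrange fun k _ hk => ?_).symm
  rw [powersetCard_eq_empty.2 (by simpa using hk), sum_empty]

variable (hber : IsBerezinIntegral C w ber)
    (hw : ∀ i j, w i * w j = -(w j * w i)) (hw0 : ∀ i, w i * w i = 0)
    (hX : ∀ i j, X i * X j = -(X j * X i)) (hX0 : ∀ i, X i * X i = 0)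
    (hXw : ∀ i j, X i * w j = -(w j * X i)) (hXC : ∀ i, X i ∈ C) {N : ℕ} (hN : m < N)
include hber hw hw0 hX hX0 hXw hXC hN

lemma IsBerezinIntegral.apply_mul_gexp {d : A} (hd : d ∈ C) (B : Finset (Fin m)) :
    ber (d * gmonomial w B * gexp N (∑ i, X i * w i)) = fourierSign B • (d * gmonomial X Bᶜ) := by
  have hwX : ∀ i j, w i * X j = -(X j * w i) := fun i j => by rw [hXw, neg_neg]
  have hsq : ∀ i j, X i * w i * (X j * w j) = -(X i * X j * (w i * w j)) := fun i j => by
    rw [mul_assoc, ← mul_assoc (w i), hwX]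
    simp only [neg_mul, mul_neg, mul_assoc]
  have hpair : ∀ i j, Commute (X i * w i) (X j * w j) := fun i j => by
    rw [Commute, SemiconjBy, hsq, hsq, hX, hw, neg_mul, mul_neg, neg_neg]
  have hpair0 : ∀ i, X i * w i * (X i * w i) = 0 := fun i => by rw [hsq, hX0, zero_mul, neg_zero]
  have hterm : ∀ S, ber (d * gmonomial w B * gmonomial (fun i => X i * w i) S) =
      if S = Bᶜ then fourierSign B • (d * gmonomial X Bᶜ) else 0 := fun S => by
    rw [gmonomial_pointwise_mul hXw, mul_smul_comm, map_zsmul, mul_assoc d,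
      ← mul_assoc (gmonomial w B), gmonomial_mul_gmonomial_comm hXw B S, smul_mul_assoc,
      mul_smul_comm, map_zsmul, mul_assoc (gmonomial X S), ← mul_assoc d,
      hber.apply_mul_gmonomial_mul_gmonomial hw hw0 (mul_mem hd (gmonomial_mem X hXC S))]
    split_ifs with hS
    · subst hS
      rw [smul_smul, smul_smul, fourierSign, pow_add, pow_add]
    · rw [smul_zero, smul_zero]
  rw [gexp_sum hpair hpair0 hN, mul_sum, map_sum, sum_congr rfl fun S _ => hterm S,
    sum_ite_eq' univ, if_pos (mem_univ _)]

lemma IsBerezinIntegral.apply_gevalP_mul_gexp {f : Finset (Fin m) → A} (hfC : ∀ I, f I ∈ C) :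
    ber (gevalP f w * gexp N (∑ i, X i * w i)) = ∑ I, fourierSign I • (f I * gmonomial X Iᶜ) := by
  rw [gevalP, sum_mul, map_sum]
  exact sum_congr rfl fun I _ => hber.apply_mul_gexp hw hw0 hX hX0 hXw hXC hN (hfC I) I

lemma IsBerezinIntegral.fourier_convolution_term (hm : Even m) {c c' : A} (hcc' : c * c' ∈ C)
    (hc' : ∀ a, c' * a = a * c') (I J : Finset (Fin m)) :
    ber ((if Iᶜ ⊆ J then convSign I J • (c * c' * gmonomial w (J \ Iᶜ)) else 0) *
        gexp N (∑ i, X i * w i)) =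
      fourierSign I • (c * gmonomial X Iᶜ) * (fourierSign J • (c' * gmonomial X Jᶜ)) := by
  have hshuffle : c * gmonomial X Iᶜ * (c' * gmonomial X Jᶜ) =
      c * c' * (gmonomial X Iᶜ * gmonomial X Jᶜ) := by
    rw [mul_assoc c, ← mul_assoc (gmonomial X Iᶜ) c', ← hc', mul_assoc c', ← mul_assoc c]
  rw [smul_mul_smul_comm, hshuffle, gmonomial_mul hX hX0]
  split_ifs with h hd hd
  · have hcompl : (J \ Iᶜ)ᶜ = Iᶜ ∪ Jᶜ := by rw [compl_sdiff, himp_eq]; rfl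
    rw [smul_mul_assoc, map_zsmul, hber.apply_mul_gexp hw hw0 hX hX0 hXw hXC hN hcc', smul_smul,
      hcompl, convSign_mul_fourierSign_sdiff hm h, mul_smul_comm, smul_smul]
  · exact absurd (disjoint_compl_right_iff.2 h) hd
  · exact absurd (disjoint_compl_right_iff.1 hd) h
  · rw [zero_mul, map_zero, mul_zero, smul_zero]

end Fourier

end Berezin

end Grassmann

theorem grassmann_convolution_theorem_general
    {A : Type*} [Ring A] [Algebra ℂ A] [StarRing A] (Cθ Cη : Subring A) (n : ℕ)
    (θ η ξ : Fin (2 * n) → A)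
    (hθ : ∀ i j, θ i * θ j = -(θ j * θ i)) (hθ0 : ∀ i, θ i * θ i = 0)
    (hη : ∀ i j, η i * η j = -(η j * η i)) (hη0 : ∀ i, η i * η i = 0)
    (hηθ : ∀ i j, η i * θ j = -(θ j * η i))
    (hξ : ∀ i j, star (ξ i) * star (ξ j) = -(star (ξ j) * star (ξ i)))
    (hξ0 : ∀ i, star (ξ i) * star (ξ i) = 0)
    (hξθ : ∀ i j, star (ξ i) * θ j = -(θ j * star (ξ i)))
    (hξη : ∀ i j, star (ξ i) * η j = -(η j * star (ξ i)))
    (hηCθ : ∀ i, η i ∈ Cθ) (hξCθ : ∀ i, star (ξ i) ∈ Cθ)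
    (hξCη : ∀ i, star (ξ i) ∈ Cη)
    (f f' : Finset (Fin (2 * n)) → A)
    (hfCθ : ∀ I, f I ∈ Cθ) (hfCη : ∀ I, f I ∈ Cη)
    (hf'Cθ : ∀ I, f' I ∈ Cθ) (hf'Cη : ∀ I, f' I ∈ Cη)
    (hf'central : ∀ I a, f' I * a = a * f' I)
    (berθ berη : A →ₗ[ℂ] A)
    (hberθ : ∀ c ∈ Cθ, ∀ I : Finset (Fin (2 * n)),
      berθ (c * gmonomial θ I) = if I = Finset.univ then c else 0)
    (hberη : ∀ c ∈ Cη, ∀ I : Finset (Fin (2 * n)),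
      berη (c * gmonomial η I) = if I = Finset.univ then c else 0) :
    berη (berθ (gevalP f θ * gevalP f' (fun i => η i - θ i)) *
        gexp (4 * n + 1) (∑ i, star (ξ i) * η i)) =
      berη (gevalP f η * gexp (4 * n + 1) (∑ i, star (ξ i) * η i)) *
        berθ (gevalP f' θ * gexp (4 * n + 1) (∑ i, star (ξ i) * θ i)) := by
  have hθint : Grassmann.IsBerezinIntegral Cθ θ berθ := hberθ
  have hηint : Grassmann.IsBerezinIntegral Cη η berη := hberη
  have hN : 2 * n < 4 * n + 1 := by omega
  rw [hθint.apply_gevalP_mul_gevalP_sub hθ hθ0 hηθ hηCθ hfCθ hf'Cθ hf'central,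
    hηint.apply_gevalP_mul_gexp hη hη0 hξ hξ0 hξη hξCη hN hfCη,
    hθint.apply_gevalP_mul_gexp hθ hθ0 hξ hξ0 hξθ hξCθ hN hf'Cθ, sum_mul_sum, sum_mul, map_sum]
  refine sum_congr rfl fun I _ => ?_
  rw [sum_mul, map_sum]
  exact sum_congr rfl fun J _ => hηint.fourier_convolution_term hη hη0 hξ hξ0 hξη hξCη hN
    (even_two_mul n) (mul_mem (hfCη I) (hf'Cη J)) (hf'central J) I J

/-- Grassmann convolution theorem: for two Grassmann polynomials `f`, `f'` in `2n`
Grassmann variables (with even coefficients in the ambient coefficient algebra),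
with convolution `(f * f')(xi) = int deta f(eta) f'(xi - eta)` and Fourier
transform `(F f)(xi) = int deta f(eta) exp(sum_i xi_i* eta_i)` (where `*` is the
conjugation of the coefficient algebra), one has `F(f conv f') = (F f) (F f')`.
Here `theta` is the inner integration variable (with Berezin integral `ber_theta`),
`eta` the outer one (with Berezin integral `ber_eta`), and the identity is
evaluated at the odd vector `xi`. -/
theorem grassmann_convolution_theorem
    {A : Type*} [Ring A] [Algebra ℂ A] [StarRing A] (Cθ Cη : Subring A) (n : ℕ)
    (θ η ξ : Fin (2 * n) → A)
    (hθ : ∀ i j, θ i * θ j = -(θ j * θ i)) (hθ0 : ∀ i, θ i * θ i = 0)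
    (hη : ∀ i j, η i * η j = -(η j * η i)) (hη0 : ∀ i, η i * η i = 0)
    (hηθ : ∀ i j, η i * θ j = -(θ j * η i))
    (hξ : ∀ i j, star (ξ i) * star (ξ j) = -(star (ξ j) * star (ξ i)))
    (hξ0 : ∀ i, star (ξ i) * star (ξ i) = 0)
    (hξθ : ∀ i j, star (ξ i) * θ j = -(θ j * star (ξ i)))
    (hξη : ∀ i j, star (ξ i) * η j = -(η j * star (ξ i)))
    (hηCθ : ∀ i, η i ∈ Cθ) (hξCθ : ∀ i, star (ξ i) ∈ Cθ)
    (hξCη : ∀ i, star (ξ i) ∈ Cη)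
    (f f' : Finset (Fin (2 * n)) → A)
    (hfCθ : ∀ I, f I ∈ Cθ) (hfCη : ∀ I, f I ∈ Cη)
    (hf'Cθ : ∀ I, f' I ∈ Cθ) (hf'Cη : ∀ I, f' I ∈ Cη)
    (hfcentral : ∀ I a, f I * a = a * f I)
    (hf'central : ∀ I a, f' I * a = a * f' I)
    (berθ berη : A →ₗ[ℂ] A)
    (hberθ : ∀ c ∈ Cθ, ∀ I : Finset (Fin (2 * n)),
      berθ (c * gmonomial θ I) = if I = Finset.univ then c else 0)
    (hberη : ∀ c ∈ Cη, ∀ I : Finset (Fin (2 * n)),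
      berη (c * gmonomial η I) = if I = Finset.univ then c else 0) :
    berη (berθ (gevalP f θ * gevalP f' (fun i => η i - θ i)) *
        gexp (4 * n + 1) (∑ i, star (ξ i) * η i)) =
      berη (gevalP f η * gexp (4 * n + 1) (∑ i, star (ξ i) * η i)) *
        berθ (gevalP f' θ * gexp (4 * n + 1) (∑ i, star (ξ i) * θ i)) :=
  grassmann_convolution_theorem_general Cθ Cη n θ η ξ hθ hθ0 hη hη0 hηθ hξ hξ0 hξθ hξη hηCθ hξCθ
    hξCη f f' hfCθ hfCη hf'Cθ hf'Cη hf'central berθ berη hberθ hberη
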